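/- arXiv:1908.02164 — 3 statements merged into one kernel-verified Lean document; each statement's English description precedes it below -/
import Mathlib

section
/- Let δ ∈ ℝ^{d×d} be an invertible diagonal matrix with positive diagonal entries, Σ₁ ∈ ℝ^{d×d} symmetric positive definite, β ∈ ℝ^{d×m} with βᵀΣ₁⁻¹β invertible, and Σ_c = Σ₁⁻¹β(βᵀΣ₁⁻¹β)⁻¹βᵀΣ₁⁻¹. Then the null space of the symmetric positive semi-definite matrix δ(Σ₁⁻¹ - Σ_c)δ is exactly the column space of δ⁻¹β. -/
open Matrix

theorem stmt_5 (d m : ℕ) (δ S1 : Matrix (Fin d) (Fin d) ℝ) (β : Matrix (Fin d) (Fin m) ℝ)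
    (hδdiag : ∀ i j, i ≠ j → δ i j = 0) (hδpos : ∀ i, 0 < δ i i)
    (hS1 : S1.PosDef) (hβ : IsUnit (βᵀ * S1⁻¹ * β)) (x : Fin d → ℝ) :
    (δ * (S1⁻¹ - S1⁻¹ * β * (βᵀ * S1⁻¹ * β)⁻¹ * βᵀ * S1⁻¹) * δ) *ᵥ x = 0 ↔
      ∃ v : Fin m → ℝ, x = (δ⁻¹ * β) *ᵥ v := by
  have hδeq : δ = Matrix.diagonal (fun i => δ i i) := by
    ext i j
    rcases eq_or_ne i j with h | h
    · subst h; simp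
    · simp [Matrix.diagonal_apply_ne _ h, hδdiag i j h]
  have hδdet : IsUnit δ.det := by
    rw [hδeq, Matrix.det_diagonal]
    exact isUnit_iff_ne_zero.mpr (ne_of_gt (Finset.prod_pos fun i _ => hδpos i))
  have hS1det : IsUnit S1.det := isUnit_iff_ne_zero.mpr (ne_of_gt hS1.det_pos)
  have hBdet : IsUnit (βᵀ * S1⁻¹ * β).det := (Matrix.isUnit_iff_isUnit_det _).mp hβ
  have hδinv : δ⁻¹ * δ = 1 := Matrix.nonsing_inv_mul δ hδdet
  have hδinv' : δ * δ⁻¹ = 1 := Matrix.mul_nonsing_inv δ hδdet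
  have hBinv : (βᵀ * S1⁻¹ * β)⁻¹ * (βᵀ * S1⁻¹ * β) = 1 :=
    Matrix.nonsing_inv_mul _ hBdet
  have hS1inv : S1 * S1⁻¹ = 1 := Matrix.mul_nonsing_inv S1 hS1det
  have hPβ : (S1⁻¹ - S1⁻¹ * β * (βᵀ * S1⁻¹ * β)⁻¹ * βᵀ * S1⁻¹) * β = 0 := by
    rw [Matrix.sub_mul]
    have h : S1⁻¹ * β * (βᵀ * S1⁻¹ * β)⁻¹ * βᵀ * S1⁻¹ * β
        = S1⁻¹ * β * ((βᵀ * S1⁻¹ * β)⁻¹ * (βᵀ * S1⁻¹ * β)) := by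
      simp only [Matrix.mul_assoc]
    rw [h, hBinv, Matrix.mul_one, sub_self]
  constructor
  · intro h
    have h1 : ((S1⁻¹ - S1⁻¹ * β * (βᵀ * S1⁻¹ * β)⁻¹ * βᵀ * S1⁻¹) * δ) *ᵥ x = 0 := by
      have h' := congrArg (fun w => δ⁻¹ *ᵥ w) h
      simp only [Matrix.mulVec_mulVec, Matrix.mulVec_zero] at h'
      rwa [← Matrix.mul_assoc, ← Matrix.mul_assoc, hδinv, Matrix.one_mul] at h'
    have h2 : (S1⁻¹ * δ) *ᵥ x
        = (S1⁻¹ * β * (βᵀ * S1⁻¹ * β)⁻¹ * βᵀ * S1⁻¹ * δ) *ᵥ x := by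
      rw [Matrix.sub_mul, Matrix.sub_mulVec] at h1
      exact sub_eq_zero.mp h1
    have h5 := congrArg (fun w => (δ⁻¹ * S1) *ᵥ w) h2
    simp only [Matrix.mulVec_mulVec] at h5
    refine ⟨((βᵀ * S1⁻¹ * β)⁻¹ * βᵀ * S1⁻¹ * δ) *ᵥ x, ?_⟩
    have hL : δ⁻¹ * S1 * (S1⁻¹ * δ) = 1 := by
      rw [Matrix.mul_assoc δ⁻¹ S1, ← Matrix.mul_assoc S1, hS1inv, Matrix.one_mul, hδinv]
    have hR : δ⁻¹ * S1 * (S1⁻¹ * β * (βᵀ * S1⁻¹ * β)⁻¹ * βᵀ * S1⁻¹ * δ)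
        = δ⁻¹ * β * ((βᵀ * S1⁻¹ * β)⁻¹ * βᵀ * S1⁻¹ * δ) := by
      simp only [Matrix.mul_assoc]
      rw [← Matrix.mul_assoc S1 S1⁻¹, hS1inv, Matrix.one_mul]
    rw [hL, hR, Matrix.one_mulVec] at h5
    rw [Matrix.mulVec_mulVec]
    exact h5
  · rintro ⟨v, rfl⟩
    rw [Matrix.mulVec_mulVec]
    have h : δ * (S1⁻¹ - S1⁻¹ * β * (βᵀ * S1⁻¹ * β)⁻¹ * βᵀ * S1⁻¹) * δ * (δ⁻¹ * β) = 0 := by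
      rw [Matrix.mul_assoc (δ * _), ← Matrix.mul_assoc δ δ⁻¹, hδinv', Matrix.one_mul,
        Matrix.mul_assoc, hPβ, Matrix.mul_zero]
    rw [h, Matrix.zero_mulVec]
end

section
/- Let A be an arbitrary real d×d matrix and B a real symmetric positive definite d×d matrix. If λ is a real eigenvalue of AB, then λ = λ₁λ₂ for some λ₁ ∈ S(A) and λ₂ ∈ S(B), where S(M) = {vᵀMv : ‖v‖ = 1}. In particular, if every element of S(A) is positive, then every real eigenvalue of AB is positive. -/
/-!
Let `C` be the symmetric square root of `B` and `ABv = λv` with `v ≠ 0`. Then `w = Bv` satisfies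
`wᵀAw = λ vᵀBv` and `wᵀw = vᵀB²v`, while `x = Cv` satisfies `xᵀBx = vᵀB²v` and `xᵀx = vᵀBv`.
So `λ` is the product of the Rayleigh quotients of `A` at `w` and of `B` at `x`, and normalising
`w` and `x` turns these quotients into values of the quadratic forms on the unit sphere.
-/

open Matrix

namespace Matrix

variable {n : Type*} [Fintype n]

noncomputable def rayleighQuotient (M : Matrix n n ℝ) (x : n → ℝ) : ℝ :=
  x ⬝ᵥ (M *ᵥ x) / (x ⬝ᵥ x)

lemma dotProduct_self_pos {x : n → ℝ} (hx : x ≠ 0) : 0 < x ⬝ᵥ x :=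
  (Finset.sum_nonneg fun i _ => mul_self_nonneg (x i)).lt_of_ne
    (Ne.symm (dotProduct_self_eq_zero.not.mpr hx))

lemma exists_dotProduct_self_eq_one_rayleighQuotient_eq (M : Matrix n n ℝ) {x : n → ℝ}
    (hx : x ≠ 0) : ∃ v : n → ℝ, v ⬝ᵥ v = 1 ∧ v ⬝ᵥ (M *ᵥ v) = M.rayleighQuotient x := by
  have hxx := dotProduct_self_pos hx
  have hsq : √(x ⬝ᵥ x) ^ 2 = x ⬝ᵥ x := Real.sq_sqrt hxx.le
  refine ⟨(√(x ⬝ᵥ x))⁻¹ • x, ?_, ?_⟩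
  · rw [smul_dotProduct, dotProduct_smul, smul_smul, smul_eq_mul, ← sq, inv_pow, hsq,
      inv_mul_cancel₀ hxx.ne']
  · rw [mulVec_smul, smul_dotProduct, dotProduct_smul, smul_smul, smul_eq_mul, ← sq, inv_pow,
      hsq, rayleighQuotient, inv_mul_eq_div]

lemma PosDef.rayleighQuotient_pos {M : Matrix n n ℝ} (hM : M.PosDef) {x : n → ℝ} (hx : x ≠ 0) :
    0 < M.rayleighQuotient x :=
  div_pos (by simpa using hM.dotProduct_mulVec_pos hx) (dotProduct_self_pos hx)

lemma IsSymm.mulVec_dotProduct {M : Matrix n n ℝ} (hM : M.IsSymm) (x y : n → ℝ) :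
    (M *ᵥ x) ⬝ᵥ y = x ⬝ᵥ (M *ᵥ y) := by
  rw [dotProduct_mulVec, ← mulVec_transpose, hM.eq]

lemma eq_rayleighQuotient_mul_rayleighQuotient_of_mul_mulVec_eq_smul [DecidableEq n]
    {A B : Matrix n n ℝ} (hB : B.PosDef) {lam : ℝ} {v : n → ℝ} (hv : v ≠ 0)
    (hAB : (A * B) *ᵥ v = lam • v) :
    ∃ w x : n → ℝ, w ≠ 0 ∧ x ≠ 0 ∧
      lam = A.rayleighQuotient w * B.rayleighQuotient x := by
  obtain ⟨C, hCt, hCC⟩ : ∃ C : Matrix n n ℝ, C.IsSymm ∧ C * C = B := by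
    open scoped MatrixOrder in
    exact ⟨CFC.sqrt B, by simpa using (CFC.sqrt_nonneg B).posSemidef.isHermitian,
      CFC.sqrt_mul_sqrt_self B hB.posSemidef.nonneg⟩
  have hBt : B.IsSymm := by simpa using hB.isHermitian
  have hvBv : 0 < v ⬝ᵥ (B *ᵥ v) := by simpa using hB.dotProduct_mulVec_pos hv
  have hBv : B *ᵥ v ≠ 0 := fun h => by simp [h] at hvBv
  have hCv : C *ᵥ v ≠ 0 := fun h => by simp [← hCC, ← mulVec_mulVec, h] at hBv
  have hBvBv := dotProduct_self_pos hBv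
  have hquadA : (B *ᵥ v) ⬝ᵥ (A *ᵥ (B *ᵥ v)) = lam * v ⬝ᵥ (B *ᵥ v) := by
    rw [mulVec_mulVec, hAB, dotProduct_smul, smul_eq_mul, hBt.mulVec_dotProduct]
  have hnormC : (C *ᵥ v) ⬝ᵥ (C *ᵥ v) = v ⬝ᵥ (B *ᵥ v) := by
    rw [hCt.mulVec_dotProduct, mulVec_mulVec, hCC]
  have hquadB : (C *ᵥ v) ⬝ᵥ (B *ᵥ (C *ᵥ v)) = (B *ᵥ v) ⬝ᵥ (B *ᵥ v) := by
    have hBC : B * C = C * B := by rw [← hCC, mul_assoc]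
    rw [mulVec_mulVec, hBC, ← mulVec_mulVec, ← hCt.mulVec_dotProduct, mulVec_mulVec, hCC]
  refine ⟨B *ᵥ v, C *ᵥ v, hBv, hCv, ?_⟩
  rw [rayleighQuotient, rayleighQuotient, hquadA, hnormC, hquadB]
  field_simp

end Matrix

theorem stmt_7 (d : ℕ) (A B : Matrix (Fin d) (Fin d) ℝ) (hB : B.PosDef) (lam : ℝ)
    (h : ∃ v : Fin d → ℝ, v ≠ 0 ∧ (A * B) *ᵥ v = lam • v) :
    (∃ lam₁ lam₂ : ℝ,
        (∃ v : Fin d → ℝ, v ⬝ᵥ v = 1 ∧ v ⬝ᵥ (A *ᵥ v) = lam₁) ∧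
        (∃ w : Fin d → ℝ, w ⬝ᵥ w = 1 ∧ w ⬝ᵥ (B *ᵥ w) = lam₂) ∧
        lam = lam₁ * lam₂) ∧
    ((∀ v : Fin d → ℝ, v ⬝ᵥ v = 1 → 0 < v ⬝ᵥ (A *ᵥ v)) → 0 < lam) := by
  obtain ⟨v, hv, hAB⟩ := h
  obtain ⟨w, x, hw, hx, hlam⟩ :=
    eq_rayleighQuotient_mul_rayleighQuotient_of_mul_mulVec_eq_smul hB hv hAB
  obtain ⟨w₁, hw₁, hAw₁⟩ := exists_dotProduct_self_eq_one_rayleighQuotient_eq A hw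
  obtain ⟨x₁, hx₁, hBx₁⟩ := exists_dotProduct_self_eq_one_rayleighQuotient_eq B hx
  refine ⟨⟨_, _, ⟨w₁, hw₁, hAw₁⟩, ⟨x₁, hx₁, hBx₁⟩, hlam⟩, fun hA => ?_⟩
  rw [hlam]
  exact mul_pos (hAw₁ ▸ hA w₁ hw₁) (hB.rayleighQuotient_pos hx)
end

section
/- Under the setup Σ₀ = Ψ₀Ψ₀ᵀ, Σ₁ = Ψ₁Ψ₁ᵀ invertible, β = Ψ₁Ψ₀ᵀΣ₀⁻¹, Σ₂ = Σ₁ - Ψ₁Ψ₀ᵀβᵀ, Σ₃ = Σ₁ - Ψ₁Ψ₀ᵀβᵀ - βΨ₀Ψ₁ᵀ + βΣ₀βᵀ, and γ < 0: if Σ₃ is positive definite, then the matrix Q_u = (2γ/(1-γ))Σ₂ᵀΣ₁⁻¹Σ₂ + 2Σ₃ is symmetric positive definite. -/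
/-!
Since `β` is the least-squares regression coefficient of `Ψ₁` on `Ψ₀`, all three correction
terms in `Σ₃` equal `N = Ψ₁Ψ₀ᵀΣ₀⁻¹Ψ₀Ψ₁ᵀ ⪰ 0`, so `Σ₃ = Σ₂ = Σ₁ - N` and `0 ≺ Σ₃ ⪯ Σ₁`.
The block matrix `[[Σ₁, Σ₃], [Σ₃, Σ₃]] = [[Σ₁ - Σ₃, 0], [0, 0]] + [[Σ₃, Σ₃], [Σ₃, Σ₃]]` is then
positive semidefinite, and its Schur complement gives `Σ₃Σ₁⁻¹Σ₃ ⪯ Σ₃`. With `c = 2γ/(1-γ)`,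
which lies in `(-2, 0]` for `γ < 0`,
`Q_u = (c + 2) Σ₃ + (-c) (Σ₃ - Σ₃Σ₁⁻¹Σ₃)` is positive definite plus positive semidefinite.
-/

open Matrix

namespace Matrix

variable {n m d R : Type*} [Fintype n] [Fintype m]

theorem nonsing_inv_mul_mul_nonsing_inv [DecidableEq n] [CommRing R] (A : Matrix n n R) :
    A⁻¹ * A * A⁻¹ = A⁻¹ := by
  rcases nonsing_inv_cancel_or_zero A with ⟨h, -⟩ | h
  · rw [h, Matrix.one_mul]
  · rw [h, Matrix.mul_zero]

section IsSymm

variable [DecidableEq m] [CommRing R] {S : Matrix m m R} (hS : S.IsSymm) (C : Matrix d m R)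
include hS

theorem IsSymm.transpose_mul_nonsing_inv : (C * S⁻¹)ᵀ = S⁻¹ * Cᵀ := by
  rw [transpose_mul, transpose_nonsing_inv, hS.eq]

theorem IsSymm.mul_nonsing_inv_mul_mul_transpose :
    C * S⁻¹ * S * (C * S⁻¹)ᵀ = C * S⁻¹ * Cᵀ := by
  rw [hS.transpose_mul_nonsing_inv, Matrix.mul_assoc C S⁻¹ S, Matrix.mul_assoc C,
    ← Matrix.mul_assoc (S⁻¹ * S), nonsing_inv_mul_mul_nonsing_inv, Matrix.mul_assoc]

end IsSymm

section PosSemidef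

variable [DecidableEq n] [CommRing R] [PartialOrder R] [StarRing R]

theorem PosSemidef.fromBlocks_self {A : Matrix n n R} (hA : A.PosSemidef) :
    (fromBlocks A A A A).PosSemidef := by
  have h := hA.mul_mul_conjTranspose_same (fromRows (1 : Matrix n n R) (1 : Matrix n n R))
  rwa [conjTranspose_fromRows_eq_fromCols_conjTranspose, conjTranspose_one, fromRows_mul,
    Matrix.one_mul, fromRows_mul_fromCols, Matrix.mul_one] at h

theorem PosSemidef.fromBlocks_zero {A : Matrix n n R} (hA : A.PosSemidef) :
    (fromBlocks A 0 0 (0 : Matrix m m R)).PosSemidef := by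
  have h := hA.mul_mul_conjTranspose_same (fromRows (1 : Matrix n n R) (0 : Matrix m n R))
  rwa [conjTranspose_fromRows_eq_fromCols_conjTranspose, conjTranspose_one, conjTranspose_zero,
    fromRows_mul, Matrix.one_mul, Matrix.zero_mul, fromRows_mul_fromCols, Matrix.mul_one,
    Matrix.mul_zero, Matrix.zero_mul, Matrix.mul_zero] at h

end PosSemidef

section Loewner

variable [DecidableEq n] {K : Type*} [Field K] [LinearOrder K] [StarRing K] [StarOrderedRing K]

theorem PosSemidef.sub_mul_nonsing_inv_mul {A B : Matrix n n K} (hA : A.PosSemidef)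
    (hB : B.PosDef) (hAB : (B - A).PosSemidef) : (A - A * B⁻¹ * A).PosSemidef := by
  have : Invertible B := hB.isUnit.invertible
  have hblocks : (fromBlocks B A Aᴴ A).PosSemidef := by
    rw [hA.isHermitian.eq, show fromBlocks B A A A = fromBlocks (B - A) 0 0 0 + fromBlocks A A A A
      by rw [fromBlocks_add, sub_add_cancel, zero_add]]
    exact hAB.fromBlocks_zero.add hA.fromBlocks_self
  simpa only [hA.isHermitian.eq] using (PosDef.fromBlocks₁₁ A A hB).mp hblocks

theorem PosDef.smul_mul_nonsing_inv_mul_add_smul [TrivialStar K] {A B : Matrix n n K}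
    (hA : A.PosDef) (hB : B.PosDef) (hAB : (B - A).PosSemidef) {a b : K} (ha : a ≤ 0)
    (hab : 0 < a + b) : (a • (A * B⁻¹ * A) + b • A).PosDef := by
  rw [show a • (A * B⁻¹ * A) + b • A = (a + b) • A + (-a) • (A - A * B⁻¹ * A) by module]
  exact (hA.smul hab).add_posSemidef
    ((hA.posSemidef.sub_mul_nonsing_inv_mul hB hAB).smul (neg_nonneg.mpr ha))

end Loewner

end Matrix

theorem stmt_11_general (d m : ℕ) (Ψ₀ : Matrix (Fin m) (Fin (d + m)) ℝ)
    (Ψ₁ : Matrix (Fin d) (Fin (d + m)) ℝ)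
    (γ : ℝ) (hγ : γ < 0)
    (S0 : Matrix (Fin m) (Fin m) ℝ) (hS0def : S0 = Ψ₀ * Ψ₀ᵀ)
    (S1 : Matrix (Fin d) (Fin d) ℝ)
    (β : Matrix (Fin d) (Fin m) ℝ) (hβ : β = Ψ₁ * Ψ₀ᵀ * S0⁻¹)
    (S2 : Matrix (Fin d) (Fin d) ℝ) (hS2 : S2 = S1 - Ψ₁ * Ψ₀ᵀ * βᵀ)
    (S3 : Matrix (Fin d) (Fin d) ℝ)
    (hS3 : S3 = S1 - Ψ₁ * Ψ₀ᵀ * βᵀ - β * Ψ₀ * Ψ₁ᵀ + β * S0 * βᵀ)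
    (hS3pd : S3.PosDef) :
    ((2 * γ / (1 - γ)) • (S2ᵀ * S1⁻¹ * S2) + (2 : ℝ) • S3).PosDef := by
  set C := Ψ₁ * Ψ₀ᵀ with hC
  have hS0 : S0.IsSymm := by rw [hS0def, IsSymm, transpose_mul, transpose_transpose]
  have hCβ : C * βᵀ = C * S0⁻¹ * Cᵀ := by
    rw [hβ, hS0.transpose_mul_nonsing_inv, ← Matrix.mul_assoc]
  have hβC : β * Ψ₀ * Ψ₁ᵀ = C * S0⁻¹ * Cᵀ := by
    rw [Matrix.mul_assoc β, hβ, hC, transpose_mul, transpose_transpose]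
  have hβS0β : β * S0 * βᵀ = C * S0⁻¹ * Cᵀ := by
    rw [hβ, hS0.mul_nonsing_inv_mul_mul_transpose]
  have hS32 : S3 = S2 := by rw [hS3, hS2, hCβ, hβC, hβS0β, sub_add_cancel]
  have hS0psd : S0.PosSemidef := by
    simpa only [hS0def, conjTranspose_eq_transpose_of_trivial]
      using posSemidef_self_mul_conjTranspose Ψ₀
  have hS3_le_S1 : (S1 - S3).PosSemidef := by
    rw [hS32, hS2, hCβ, sub_sub_cancel]
    simpa only [conjTranspose_eq_transpose_of_trivial]
      using hS0psd.inv.mul_mul_conjTranspose_same C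
  have hS1 : S1.PosDef := by simpa only [add_sub_cancel] using hS3pd.add_posSemidef hS3_le_S1
  have hS2T : S2ᵀ = S2 := by
    rw [← hS32, ← conjTranspose_eq_transpose_of_trivial, hS3pd.isHermitian.eq]
  have hγ' : 0 < 1 - γ := by linarith
  rw [hS2T, ← hS32]
  refine hS3pd.smul_mul_nonsing_inv_mul_add_smul hS1 hS3_le_S1
    (div_nonpos_of_nonpos_of_nonneg (by linarith) hγ'.le) ?_
  rw [show 2 * γ / (1 - γ) + 2 = 2 / (1 - γ) by field_simp; ring]
  positivity

theorem stmt_11 (d m : ℕ) (Ψ₀ : Matrix (Fin m) (Fin (d + m)) ℝ)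
    (Ψ₁ : Matrix (Fin d) (Fin (d + m)) ℝ)
    (hS0 : IsUnit (Ψ₀ * Ψ₀ᵀ)) (hS1 : IsUnit (Ψ₁ * Ψ₁ᵀ)) (γ : ℝ) (hγ : γ < 0)
    (S0 : Matrix (Fin m) (Fin m) ℝ) (hS0def : S0 = Ψ₀ * Ψ₀ᵀ)
    (S1 : Matrix (Fin d) (Fin d) ℝ) (hS1def : S1 = Ψ₁ * Ψ₁ᵀ)
    (β : Matrix (Fin d) (Fin m) ℝ) (hβ : β = Ψ₁ * Ψ₀ᵀ * S0⁻¹)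
    (S2 : Matrix (Fin d) (Fin d) ℝ) (hS2 : S2 = S1 - Ψ₁ * Ψ₀ᵀ * βᵀ)
    (S3 : Matrix (Fin d) (Fin d) ℝ)
    (hS3 : S3 = S1 - Ψ₁ * Ψ₀ᵀ * βᵀ - β * Ψ₀ * Ψ₁ᵀ + β * S0 * βᵀ)
    (hS3pd : S3.PosDef) :
    ((2 * γ / (1 - γ)) • (S2ᵀ * S1⁻¹ * S2) + (2 : ℝ) • S3).PosDef :=
  stmt_11_general d m Ψ₀ Ψ₁ γ hγ S0 hS0def S1 β hβ S2 hS2 S3 hS3 hS3pd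
end
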